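/- arXiv:2012.11706 — 3 statements merged into one kernel-verified Lean document; each statement's English description precedes it below -/
import Mathlib

section
/- Let d, N ≥ 1 and for each j ∈ {1,…,N} let γ_j : [0,1] → ℝ^d be AC² with derivative g_j. Then there exists a Borel measurable map v : ℝ × ℝ^d → ℝ^d such that for every j ∈ {1,…,N}, v(t, γ_j(t)) = g_j(t) for Lebesgue-a.e. t ∈ (0,1); i.e., finitely many AC² curves admit a common velocity field, well defined even where the curves intersect. (Key step in the proof of Lemma 2.2.) -/
/-!
Where two AC² curves meet on a set of times, their difference vanishes there; at almost every
such time the difference is differentiable (Lebesgue differentiation) and the time is an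
accumulation point of the coincidence set (its isolated points are countable), so the derivative of
the difference is zero there. Hence the velocities of curves passing through the same point agree
for a.e. time, and choosing at each point of space-time the velocity of the curve of least index
passing through it gives a Borel field.
-/

open MeasureTheory Set Filter

/-- A curve `γ : [0,1] → ℝ^d` is AC² with derivative `g` if `g ∈ L²((0,1); ℝ^d)` and
`γ(t) = γ(0) + ∫₀ᵗ g(s) ds` for all `t ∈ [0,1]`. -/
def IsAC2 {d : ℕ} (γ g : ℝ → EuclideanSpace ℝ (Fin d)) : Prop :=
  MemLp g 2 (volume.restrict (Ioc (0:ℝ) 1)) ∧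
  ∀ t ∈ Icc (0:ℝ) 1, γ t = γ 0 + ∫ s in (0:ℝ)..t, g s

theorem ae_accPt_of_mem {α : Type*} [TopologicalSpace α] [LinearOrder α] [OrderTopology α]
    [SecondCountableTopology α] [MeasurableSpace α] (μ : Measure α) [NullSingletonClass μ]
    (s : Set α) : ∀ᵐ x ∂μ, x ∈ s → AccPt x (𝓟 s) := by
  rw [ae_iff]
  refine measure_mono_null (fun x hx ↦ ?_)
    ((countable_setOfPred_isolated_right_within (s := s)).measure_zero μ)
  simp only [mem_ofPred_eq, Classical.not_imp] at hx
  refine ⟨hx.1, not_neBot.1 fun hne ↦ hx.2 (hne.mono (le_inf ?_ ?_))⟩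
  · exact nhdsWithin_mono x fun y hy ↦ ne_of_gt hy.2
  · exact le_principal_iff.2 (mem_of_superset self_mem_nhdsWithin inter_subset_left)

theorem HasDerivAt.eq_zero_of_accPt_of_forall_eq {𝕜 F : Type*} [NontriviallyNormedField 𝕜]
    [NormedAddCommGroup F] [NormedSpace 𝕜 F] {φ : 𝕜 → F} {c : F} {x : 𝕜} {s : Set 𝕜}
    (hφ : HasDerivAt φ c x) (hs : ∀ y ∈ s, φ y = φ x) (hx : AccPt x (𝓟 s)) : c = 0 :=
  hx.uniqueDiffWithinAt.eq_deriv s hφ.hasDerivWithinAt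
    ((hasDerivWithinAt_const x s (φ x)).congr hs rfl)

theorem ae_imp_eq_of_ae_hasDerivAt {F : Type*} [NormedAddCommGroup F] [NormedSpace ℝ F]
    {μ : Measure ℝ} (hμ : μ ≪ volume) {φ ψ φ' ψ' : ℝ → F}
    (hφ : ∀ᵐ t ∂μ, HasDerivAt φ (φ' t) t) (hψ : ∀ᵐ t ∂μ, HasDerivAt ψ (ψ' t) t) :
    ∀ᵐ t ∂μ, φ t = ψ t → φ' t = ψ' t := by
  filter_upwards [hφ, hψ, hμ.ae_le (ae_accPt_of_mem volume {t | φ t = ψ t})]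
    with t hφt hψt hacc heq
  refine sub_eq_zero.1 ((hφt.sub hψt).eq_zero_of_accPt_of_forall_eq (fun s hs ↦ ?_) (hacc heq))
  rw [Pi.sub_apply, Pi.sub_apply, sub_eq_zero.2 hs, sub_eq_zero.2 heq]

section DisjointedPiecewise

variable {ι X F : Type*} [LinearOrder ι] [Fintype ι] [LocallyFiniteOrderBot ι] [AddCommMonoid F]

noncomputable def disjointedPiecewise (A : ι → Set X) (f : ι → X → F) (x : X) : F :=
  ∑ i, (disjointed A i).indicator (f i) x

theorem disjointedPiecewise_apply_of_mem {A : ι → Set X} {f : ι → X → F} {x : X} {j : ι}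
    (hx : x ∈ A j) (hcompat : ∀ k, x ∈ A k → f k x = f j x) :
    disjointedPiecewise A f x = f j x := by
  obtain ⟨i, hi⟩ := mem_iUnion.1 (iUnion_disjointed (f := A) ▸ mem_iUnion_of_mem j hx)
  rw [disjointedPiecewise, Finset.sum_eq_single i, indicator_of_mem hi,
    hcompat i (disjointed_subset A i hi)]
  · exact fun k _ hki ↦ indicator_of_notMem
      (fun hk ↦ (disjoint_disjointed A hki).notMem_of_mem_left hk hi) _
  · simp

theorem Measurable.disjointedPiecewise [MeasurableSpace X] [MeasurableSpace F] [MeasurableAdd₂ F]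
    {A : ι → Set X} {f : ι → X → F} (hA : ∀ i, MeasurableSet (A i)) (hf : ∀ i, Measurable (f i)) :
    Measurable (disjointedPiecewise A f) :=
  Finset.measurable_sum _ fun i _ ↦
    (hf i).indicator (disjointedRec (fun _ _ ht ↦ ht.diff (hA _)) (hA i))

end DisjointedPiecewise

theorem exists_measurable_forall_ae_eq_of_ae_compatible {ι α E F : Type*} [LinearOrder ι]
    [Fintype ι] [LocallyFiniteOrderBot ι] [MeasurableSpace α] {μ : Measure α}
    [MeasurableSpace E] [MeasurableEq E] [AddCommMonoid F] [MeasurableSpace F] [MeasurableAdd₂ F]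
    {γ : ι → α → E} {g : ι → α → F} (hγ : ∀ i, AEMeasurable (γ i) μ)
    (hg : ∀ i, AEMeasurable (g i) μ) (hcompat : ∀ i k, ∀ᵐ t ∂μ, γ k t = γ i t → g k t = g i t) :
    ∃ v : α × E → F, Measurable v ∧ ∀ i, ∀ᵐ t ∂μ, v (t, γ i t) = g i t := by
  refine ⟨disjointedPiecewise (fun i ↦ {p | (hγ i).mk _ p.1 = p.2}) (fun i p ↦ (hg i).mk _ p.1),
    .disjointedPiecewise (fun i ↦ measurableSet_eq_fun ((hγ i).measurable_mk.comp measurable_fst)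
      measurable_snd) (fun i ↦ (hg i).measurable_mk.comp measurable_fst), fun i ↦ ?_⟩
  filter_upwards [ae_all_iff.2 fun k ↦ (hγ k).ae_eq_mk, ae_all_iff.2 fun k ↦ (hg k).ae_eq_mk,
    ae_all_iff.2 (hcompat i)] with t hγt hgt hcompat_t
  rw [disjointedPiecewise_apply_of_mem (j := i), ← hgt i]
  · exact (hγt i).symm
  · intro k hk
    rw [← hgt k, ← hgt i]
    exact hcompat_t k ((hγt k).trans hk)

namespace IsAC2

variable {d : ℕ} {γ g : ℝ → EuclideanSpace ℝ (Fin d)}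

theorem intervalIntegrable (h : IsAC2 γ g) : IntervalIntegrable g volume 0 1 :=
  (intervalIntegrable_iff_integrableOn_Ioc_of_le zero_le_one).2 (h.1.integrable one_le_two)

theorem ae_hasDerivAt (h : IsAC2 γ g) :
    ∀ᵐ t ∂volume.restrict (Ioo (0:ℝ) 1), HasDerivAt γ (g t) t := by
  rw [ae_restrict_iff' measurableSet_Ioo]
  filter_upwards [h.intervalIntegrable.ae_hasDerivAt_integral] with t ht htI
  have hmem : ∀ s ∈ Ioo (0:ℝ) 1, s ∈ uIcc (0:ℝ) 1 := fun s hs ↦ by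
    rw [uIcc_of_le zero_le_one]; exact Ioo_subset_Icc_self hs
  refine ((ht (hmem t htI) 0 (by simp)).const_add (γ 0)).congr_of_eventuallyEq ?_
  filter_upwards [Icc_mem_nhds htI.1 htI.2] with s hs using h.2 s hs

theorem continuousOn (h : IsAC2 γ g) : ContinuousOn γ (Icc 0 1) := by
  have := (intervalIntegral.continuousOn_primitive_interval' h.intervalIntegrable
    left_mem_uIcc).const_add (γ 0)
  rw [uIcc_of_le zero_le_one] at this
  exact this.congr h.2

theorem aemeasurable (h : IsAC2 γ g) : AEMeasurable γ (volume.restrict (Ioo 0 1)) :=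
  (h.continuousOn.mono Ioo_subset_Icc_self).aemeasurable measurableSet_Ioo

theorem aemeasurable_deriv (h : IsAC2 γ g) : AEMeasurable g (volume.restrict (Ioo 0 1)) :=
  h.1.aestronglyMeasurable.aemeasurable.mono_measure
    (Measure.restrict_mono Ioo_subset_Ioc_self le_rfl)

end IsAC2

theorem exists_common_velocity_field_general
    {d N : ℕ}
    (γ g : Fin N → ℝ → EuclideanSpace ℝ (Fin d))
    (h : ∀ j, IsAC2 (γ j) (g j)) :
    ∃ v : ℝ × EuclideanSpace ℝ (Fin d) → EuclideanSpace ℝ (Fin d),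
      Measurable v ∧
      ∀ j, ∀ᵐ t ∂(volume.restrict (Ioo (0:ℝ) 1)), v (t, γ j t) = g j t :=
  exists_measurable_forall_ae_eq_of_ae_compatible (fun j ↦ (h j).aemeasurable)
    (fun j ↦ (h j).aemeasurable_deriv) fun j k ↦
      ae_imp_eq_of_ae_hasDerivAt (Measure.absolutelyContinuous_of_le Measure.restrict_le_self)
        (h k).ae_hasDerivAt (h j).ae_hasDerivAt

/-- Finitely many AC² curves admit a common Borel velocity field `v : ℝ × ℝ^d → ℝ^d`,
with `v(t, γ_j(t)) = g_j(t)` for a.e. `t ∈ (0,1)` and every `j`. -/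
theorem exists_common_velocity_field
    {d N : ℕ} (hd : 1 ≤ d) (hN : 1 ≤ N)
    (γ g : Fin N → ℝ → EuclideanSpace ℝ (Fin d))
    (h : ∀ j, IsAC2 (γ j) (g j)) :
    ∃ v : ℝ × EuclideanSpace ℝ (Fin d) → EuclideanSpace ℝ (Fin d),
      Measurable v ∧
      ∀ j, ∀ᵐ t ∂(volume.restrict (Ioo (0:ℝ) 1)), v (t, γ j t) = g j t :=
  exists_common_velocity_field_general γ g h
end

section
/- Let d ≥ 1, α, β > 0, and let E ⊆ ℝ^d be nonempty and compact. Let w : (0,1) × ℝ^d → ℝ be Carathéodory with w(t,x) = 0 for all x ∉ E and a.e. t ∈ (0,1), and assume ‖w‖ := (∫₀¹ (sup_{x ∈ ℝ^d} |w(t,x)|)² dt)^{1/2} < ∞. Let γ : [0,1] → ℝ^d be AC² with derivative g and suppose F(γ) ≤ M for some M < 0. Then ∫₀¹ |g(t)|² dt ≤ (2/β)( ‖w‖/(−M) − α ) and sup_{t ∈ [0,1]} |γ(t)| ≤ (∫₀¹ |g(t)|² dt)^{1/2} + max_{x ∈ E} |x|. (Boundedness of the sublevel sets {F ≤ M} of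 the insertion-step functional, from the proof of Lemma A.8 on gradient descent.) -/
open MeasureTheory Set

/-- `u : (0,1) × ℝ^d → F` is Carathéodory: measurable in `t` for every `x`, and continuous in
`x` for a.e. `t ∈ (0,1)`. -/
def Caratheodory {E F : Type*} [TopologicalSpace E] [TopologicalSpace F] [MeasurableSpace F]
    (u : ℝ → E → F) : Prop :=
  (∀ x, Measurable fun t => u t x) ∧
  ∀ᵐ t ∂(volume.restrict (Ioo (0:ℝ) 1)), Continuous (u t)

/-- The linear part `W(γ) := −∫₀¹ w(t, γ(t)) dt` of the insertion-step functional. -/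
noncomputable def Wc {d : ℕ} (w : ℝ → EuclideanSpace ℝ (Fin d) → ℝ)
    (γ : ℝ → EuclideanSpace ℝ (Fin d)) : ℝ :=
  -∫ t in (0:ℝ)..1, w t (γ t)

/-- `L(γ) := (β/2) ∫₀¹ |γ̇(t)|² dt + α`. -/
noncomputable def Lc {d : ℕ} (α β : ℝ) (g : ℝ → EuclideanSpace ℝ (Fin d)) : ℝ :=
  (β / 2) * (∫ t in (0:ℝ)..1, ‖g t‖ ^ 2) + α

/-- The insertion-step functional `F(γ) := W(γ)/L(γ)`. -/
noncomputable def Fc {d : ℕ} (α β : ℝ) (w : ℝ → EuclideanSpace ℝ (Fin d) → ℝ)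
    (γ g : ℝ → EuclideanSpace ℝ (Fin d)) : ℝ :=
  Wc w γ / Lc α β g

/-!
From `F(γ) ≤ M < 0` and `L(γ) > 0` we get `-M · L(γ) ≤ -W(γ) ≤ ∫₀¹ sup_x |w(t,x)| dt ≤ ‖w‖`,
the last step by Cauchy–Schwarz on the probability space `(0,1)`; this bounds `∫₀¹ |g|²`.
Moreover `W(γ) ≠ 0` forces `γ(t₀) ∈ E` for some `t₀`, and then
`|γ(t)| ≤ |γ(t) - γ(t₀)| + |γ(t₀)| ≤ ∫₀¹ |g| + max_E |x| ≤ (∫₀¹ |g|²)^{1/2} + max_E |x|`.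
-/

instance : IsProbabilityMeasure (volume.restrict (Ioc (0:ℝ) 1)) :=
  ⟨by simp⟩

theorem integral_le_sqrt_integral_sq {Ω : Type*} [MeasurableSpace Ω] {μ : Measure Ω}
    [IsProbabilityMeasure μ] {f : Ω → ℝ} (hf : MemLp f 2 μ) :
    ∫ x, f x ∂μ ≤ √(∫ x, f x ^ 2 ∂μ) := by
  have hvar := ProbabilityTheory.variance_nonneg f μ
  rw [ProbabilityTheory.variance_eq_sub hf] at hvar
  exact (le_abs_self _).trans (Real.abs_le_sqrt (by simpa using hvar))

theorem memLp_two_of_integrable_sq {α : Type*} [MeasurableSpace α] {μ : Measure α}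
    {f : α → ℝ} (hf : 0 ≤ f) (hf2 : Integrable (fun x => f x ^ 2) μ) : MemLp f 2 μ := by
  have hsqrt : (fun x => √(f x ^ 2)) = f := funext fun x => Real.sqrt_sq (hf x)
  refine (memLp_two_iff_integrable_sq ?_).2 hf2
  exact hsqrt ▸ Real.continuous_sqrt.comp_aestronglyMeasurable hf2.aestronglyMeasurable

theorem intervalIntegral_le_sqrt_intervalIntegral_sq {f : ℝ → ℝ}
    (hf : MemLp f 2 (volume.restrict (Ioc (0:ℝ) 1))) :
    ∫ t in (0:ℝ)..1, f t ≤ √(∫ t in (0:ℝ)..1, f t ^ 2) := by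
  simpa only [intervalIntegral.integral_of_le zero_le_one] using integral_le_sqrt_integral_sq hf

theorem bddAbove_range_abs_of_eq_zero_off_compact {X : Type*} [TopologicalSpace X] [R1Space X]
    {u : X → ℝ} (hu : Continuous u) {E : Set X} (hE : IsCompact E) (hzero : ∀ x ∉ E, u x = 0) :
    BddAbove (range fun x => |u x|) := by
  simpa only [Real.norm_eq_abs] using
    hu.norm.bddAbove_range_of_hasCompactSupport (HasCompactSupport.intro hE hzero).norm

theorem intervalIntegral_le_sqrt_intervalIntegral_iSup_abs_sq {X : Type*} [TopologicalSpace X]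
    [R1Space X] {E : Set X} (hE : IsCompact E) {w : ℝ → X → ℝ}
    (hcont : ∀ᵐ t ∂(volume.restrict (Ioo (0:ℝ) 1)), Continuous (w t))
    (hsupp : ∀ᵐ t ∂(volume.restrict (Ioo (0:ℝ) 1)), ∀ x ∉ E, w t x = 0)
    (hInt : IntervalIntegrable (fun t => (⨆ x, |w t x|) ^ 2) volume 0 1) (γ : ℝ → X) :
    ∫ t in (0:ℝ)..1, w t (γ t) ≤ √(∫ t in (0:ℝ)..1, (⨆ x, |w t x|) ^ 2) := by
  have hIoo : volume.restrict (Ioo (0:ℝ) 1) = volume.restrict (Ioc (0:ℝ) 1) :=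
    Measure.restrict_congr_set Ioo_ae_eq_Ioc
  rw [hIoo] at hcont hsupp
  have hsup_nonneg : 0 ≤ fun t => ⨆ x, |w t x| := fun t => Real.iSup_nonneg fun x => abs_nonneg _
  have hsup : MemLp (fun t => ⨆ x, |w t x|) 2 (volume.restrict (Ioc (0:ℝ) 1)) :=
    memLp_two_of_integrable_sq hsup_nonneg
      ((intervalIntegrable_iff_integrableOn_Ioc_of_le zero_le_one).1 hInt)
  simp only [intervalIntegral.integral_of_le zero_le_one]
  refine le_trans ?_ (integral_le_sqrt_integral_sq hsup)
  by_cases hwγ : Integrable (fun t => w t (γ t)) (volume.restrict (Ioc (0:ℝ) 1))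
  · refine integral_mono_ae hwγ (hsup.integrable one_le_two) ?_
    filter_upwards [hcont, hsupp] with t hwt hzero
    exact (le_abs_self _).trans
      (le_ciSup (bddAbove_range_abs_of_eq_zero_off_compact hwt hE hzero) (γ t))
  · -- the left side is then the junk value `0`
    rw [integral_undef hwγ]
    exact integral_nonneg hsup_nonneg

theorem IsAC2.norm_sub_le_sqrt {d : ℕ} {γ g : ℝ → EuclideanSpace ℝ (Fin d)} (hγ : IsAC2 γ g)
    {s t : ℝ} (hs : s ∈ Icc (0:ℝ) 1) (ht : t ∈ Icc (0:ℝ) 1) :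
    ‖γ t - γ s‖ ≤ √(∫ u in (0:ℝ)..1, ‖g u‖ ^ 2) := by
  have hg : IntervalIntegrable g volume 0 1 :=
    (intervalIntegrable_iff_integrableOn_Ioc_of_le zero_le_one).2 (hγ.1.integrable one_le_two)
  have hs' : s ∈ uIcc (0:ℝ) 1 := by rwa [uIcc_of_le zero_le_one]
  have ht' : t ∈ uIcc (0:ℝ) 1 := by rwa [uIcc_of_le zero_le_one]
  have hsub : γ t - γ s = ∫ u in s..t, g u := by
    rw [hγ.2 t ht, hγ.2 s hs, add_sub_add_left_eq_sub]
    exact intervalIntegral.integral_interval_sub_left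
      (hg.mono_set (uIcc_subset_uIcc left_mem_uIcc ht'))
      (hg.mono_set (uIcc_subset_uIcc left_mem_uIcc hs'))
  calc ‖γ t - γ s‖ = ‖∫ u in s..t, g u‖ := by rw [hsub]
    _ ≤ |∫ u in s..t, ‖g u‖| := intervalIntegral.norm_integral_le_abs_integral_norm
    _ ≤ |∫ u in (0:ℝ)..1, ‖g u‖| :=
        intervalIntegral.abs_integral_mono_interval
          (uIoc_subset_uIoc_of_uIcc_subset_uIcc (uIcc_subset_uIcc hs' ht'))
          (ae_of_all _ fun u => norm_nonneg _) hg.norm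
    _ = ∫ u in (0:ℝ)..1, ‖g u‖ :=
        abs_of_nonneg (intervalIntegral.integral_nonneg zero_le_one fun u _ => norm_nonneg _)
    _ ≤ √(∫ u in (0:ℝ)..1, ‖g u‖ ^ 2) := intervalIntegral_le_sqrt_intervalIntegral_sq hγ.1.norm

theorem exists_mem_of_Wc_ne_zero {d : ℕ} {E : Set (EuclideanSpace ℝ (Fin d))}
    {w : ℝ → EuclideanSpace ℝ (Fin d) → ℝ}
    (hsupp : ∀ᵐ t ∂(volume.restrict (Ioo (0:ℝ) 1)), ∀ x ∉ E, w t x = 0)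
    {γ : ℝ → EuclideanSpace ℝ (Fin d)} (hW : Wc w γ ≠ 0) : ∃ t ∈ Icc (0:ℝ) 1, γ t ∈ E := by
  by_contra! hγE
  refine hW (neg_eq_zero.2 (intervalIntegral.integral_zero_ae ?_))
  rw [Measure.restrict_congr_set Ioo_ae_eq_Ioc, ae_restrict_iff' measurableSet_Ioc] at hsupp
  filter_upwards [hsupp] with t hzero ht
  rw [uIoc_of_le zero_le_one] at ht
  exact hzero ht _ (hγE t (Ioc_subset_Icc_self ht))

theorem sublevel_sets_of_F_bounded_general
    {d : ℕ} (α β : ℝ) (hα : 0 < α) (hβ : 0 < β)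
    (E : Set (EuclideanSpace ℝ (Fin d))) (hEc : IsCompact E)
    (w : ℝ → EuclideanSpace ℝ (Fin d) → ℝ)
    (hCar : Caratheodory w)
    (hsupp : ∀ᵐ t ∂(volume.restrict (Ioo (0:ℝ) 1)), ∀ x ∉ E, w t x = 0)
    (hInt : IntervalIntegrable (fun t => (⨆ x, |w t x|) ^ 2) volume 0 1)
    (γ g : ℝ → EuclideanSpace ℝ (Fin d)) (hγ : IsAC2 γ g)
    (M : ℝ) (hM : M < 0) (hFγ : Fc α β w γ g ≤ M) :
    (∫ t in (0:ℝ)..1, ‖g t‖ ^ 2) ≤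
      (2 / β) * (Real.sqrt (∫ t in (0:ℝ)..1, (⨆ x, |w t x|) ^ 2) / (-M) - α) ∧
    ∀ t ∈ Icc (0:ℝ) 1,
      ‖γ t‖ ≤ Real.sqrt (∫ t in (0:ℝ)..1, ‖g t‖ ^ 2) + sSup ((fun x => ‖x‖) '' E) := by
  have hL : 0 < Lc α β g := by
    have : 0 ≤ ∫ t in (0:ℝ)..1, ‖g t‖ ^ 2 :=
      intervalIntegral.integral_nonneg zero_le_one fun t _ => by positivity
    unfold Lc; positivity
  have hW : Wc w γ ≤ M * Lc α β g := (div_le_iff₀ hL).1 hFγ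
  have hW_bound : -Wc w γ ≤ √(∫ t in (0:ℝ)..1, (⨆ x, |w t x|) ^ 2) := by
    rw [Wc, neg_neg]
    exact intervalIntegral_le_sqrt_intervalIntegral_iSup_abs_sq hEc hCar.2 hsupp hInt γ
  refine ⟨?_, fun t ht => ?_⟩
  · have hLM : Lc α β g ≤ √(∫ t in (0:ℝ)..1, (⨆ x, |w t x|) ^ 2) / (-M) := by
      rw [le_div_iff₀ (neg_pos.2 hM)]; linarith
    rw [div_mul_eq_mul_div, le_div_iff₀ hβ]
    unfold Lc at hLM
    linarith
  · obtain ⟨t₀, ht₀, hγt₀⟩ := exists_mem_of_Wc_ne_zero hsupp (by nlinarith : Wc w γ ≠ 0)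
    calc ‖γ t‖ ≤ ‖γ t - γ t₀‖ + ‖γ t₀‖ := norm_le_norm_sub_add _ _
      _ ≤ √(∫ t in (0:ℝ)..1, ‖g t‖ ^ 2) + sSup ((fun x => ‖x‖) '' E) :=
        add_le_add (hγ.norm_sub_le_sqrt ht₀ ht)
          (le_csSup (hEc.image continuous_norm).bddAbove (mem_image_of_mem _ hγt₀))

/-- Boundedness of the sublevel sets `{F ≤ M}`, `M < 0`, of the insertion-step functional
(from the proof of Lemma A.8): `∫₀¹|γ̇|² ≤ (2/β)(‖w‖/(−M) − α)` and
`sup_t |γ(t)| ≤ (∫₀¹|γ̇|²)^{1/2} + max_{x∈E}|x|`. -/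
theorem sublevel_sets_of_F_bounded
    {d : ℕ} (hd : 1 ≤ d) (α β : ℝ) (hα : 0 < α) (hβ : 0 < β)
    (E : Set (EuclideanSpace ℝ (Fin d))) (hE : E.Nonempty) (hEc : IsCompact E)
    (w : ℝ → EuclideanSpace ℝ (Fin d) → ℝ)
    (hCar : Caratheodory w)
    (hsupp : ∀ᵐ t ∂(volume.restrict (Ioo (0:ℝ) 1)), ∀ x ∉ E, w t x = 0)
    (hInt : IntervalIntegrable (fun t => (⨆ x, |w t x|) ^ 2) volume 0 1)
    (γ g : ℝ → EuclideanSpace ℝ (Fin d)) (hγ : IsAC2 γ g)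
    (M : ℝ) (hM : M < 0) (hFγ : Fc α β w γ g ≤ M) :
    (∫ t in (0:ℝ)..1, ‖g t‖ ^ 2) ≤
      (2 / β) * (Real.sqrt (∫ t in (0:ℝ)..1, (⨆ x, |w t x|) ^ 2) / (-M) - α) ∧
    ∀ t ∈ Icc (0:ℝ) 1,
      ‖γ t‖ ≤ Real.sqrt (∫ t in (0:ℝ)..1, ‖g t‖ ^ 2) + sSup ((fun x => ‖x‖) '' E) :=
  sublevel_sets_of_F_bounded_general α β hα hβ E hEc w hCar hsupp hInt γ g hγ M hM hFγ
end

section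
/- Let d ≥ 1, let Ω ⊆ ℝ^d be open and bounded, and let E ⊆ Ω be nonempty, closed and convex. Let α, β > 0, and let w : (0,1) × ℝ^d → ℝ be such that w(t,·) is differentiable with Lipschitz gradient for a.e. t, w and ∇_x w are Carathéodory, ∫₀¹ ‖w(t,·)‖²_{C^{1,1}} dt < ∞, and w(t,x) = 0 and ∇_x w(t,x) = 0 for every x ∉ E and a.e. t. Let γ : [0,1] → closure(Ω) be AC² with derivative g such that F(γ) ≠ 0 and γ satisfies the weak Euler–Lagrange equation: −∫₀¹ ∇_x w(t, γ(t)) · η(t) dt = β F(γ) ∫₀¹ g(t) · h(t) dt for every AC² curve η : [0,1] → ℝ^d with derivative h. Then γ(t) ∈ E for all t ∈ [0,1]. (Proposition A.7: stationary points of the insertion-step functional F with nonzero energy are confined to E; in particular minimizing curves of the insertion step lie in the interior of Ω.) -/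
/-!
Write `G(t) = ∇ₓw(t, γ(t))` and `V(s) = ∫ₛ¹ G`. Testing the weak Euler–Lagrange equation against
constant curves gives `V(0) = 0`; testing it against the primitive of `m = βF(γ)γ̇ + V` and
swapping the order of integration turns it into `∫₀¹ |m|² = 0`, so `βF(γ)γ̇ = -V` a.e. Since
`∇ₓw` vanishes off `E`, `V` is constant on every excursion of `γ` outside `E`: there `γ` runs
along a segment, at zero speed if the excursion reaches `t = 0` or `t = 1` (where `V = 0`).
Such a segment either joins two points of `E`, and convexity keeps it in `E`, or it is a single
point, which is then a point of `E` as soon as `γ` meets `E` at all; and it does, for otherwise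
`W(γ) = 0` and so `F(γ) = 0`.
-/

open MeasureTheory Set
open scoped RealInnerProductSpace

/-- The (smallest) Lipschitz constant of a map. -/
noncomputable def lipConst {E F : Type*} [PseudoMetricSpace E] [PseudoMetricSpace F]
    (f : E → F) : ℝ :=
  sInf {K : ℝ | 0 ≤ K ∧ LipschitzWith (Real.toNNReal K) f}

/-- The `C^{1,1}` norm `‖φ‖_{C^{1,1}} := sup|φ| + sup|∇φ| + Lip(∇φ)`. -/
noncomputable def C11norm {d : ℕ} (φ : EuclideanSpace ℝ (Fin d) → ℝ) : ℝ :=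
  (⨆ x, |φ x|) + (⨆ x, ‖gradient φ x‖) + lipConst (gradient φ)

section LipschitzConstant

variable {X Y : Type*} [PseudoMetricSpace X] [PseudoMetricSpace Y]

lemma lipConst_nonneg (f : X → Y) : 0 ≤ lipConst f :=
  Real.sInf_nonneg fun _ hK => hK.1

lemma dist_le_lipConst_mul {f : X → Y} (hf : ∃ K : NNReal, LipschitzWith K f) (x y : X) :
    dist (f x) (f y) ≤ lipConst f * dist x y := by
  obtain ⟨K, hK⟩ := hf
  rcases (dist_nonneg (x := x) (y := y)).eq_or_lt with hxy | hxy
  · simpa [← hxy] using hK.dist_le_mul x y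
  · rw [← div_le_iff₀ hxy]
    refine le_csInf ⟨K, K.coe_nonneg, by rwa [Real.toNNReal_coe]⟩ fun L ⟨hL0, hL⟩ => ?_
    rw [div_le_iff₀ hxy]
    simpa [Real.coe_toNNReal _ hL0] using hL.dist_le_mul x y

end LipschitzConstant

section C11Norm

variable {d : ℕ}

lemma lipConst_gradient_le_C11norm (φ : EuclideanSpace ℝ (Fin d) → ℝ) :
    lipConst (gradient φ) ≤ C11norm φ := by
  have h₁ : 0 ≤ ⨆ x, |φ x| := Real.iSup_nonneg fun x => abs_nonneg _
  have h₂ : 0 ≤ ⨆ x, ‖gradient φ x‖ := Real.iSup_nonneg fun x => norm_nonneg _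
  rw [C11norm]
  linarith

lemma C11norm_nonneg (φ : EuclideanSpace ℝ (Fin d) → ℝ) : 0 ≤ C11norm φ :=
  (lipConst_nonneg _).trans (lipConst_gradient_le_C11norm φ)

lemma norm_gradient_le_C11norm_mul_dist {φ : EuclideanSpace ℝ (Fin d) → ℝ}
    (hφ : ∃ K : NNReal, LipschitzWith K (gradient φ)) {z : EuclideanSpace ℝ (Fin d)}
    (hz : gradient φ z = 0) (x : EuclideanSpace ℝ (Fin d)) :
    ‖gradient φ x‖ ≤ C11norm φ * dist x z :=
  calc ‖gradient φ x‖ = dist (gradient φ x) (gradient φ z) := by rw [hz, dist_zero_right]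
    _ ≤ lipConst (gradient φ) * dist x z := dist_le_lipConst_mul hφ x z
    _ ≤ C11norm φ * dist x z := by gcongr; exact lipConst_gradient_le_C11norm φ

end C11Norm

open TopologicalSpace in
lemma Caratheodory.aestronglyMeasurable_comp {X Y : Type*} [TopologicalSpace X]
    [MetrizableSpace X] [SecondCountableTopology X] [MeasurableSpace X] [BorelSpace X]
    [TopologicalSpace Y] [PseudoMetrizableSpace Y] [SecondCountableTopology Y]
    [MeasurableSpace Y] [BorelSpace Y] [Nonempty Y] {u : ℝ → X → Y} (hu : Caratheodory u)
    {k : ℝ → X} (hk : ContinuousOn k (Ioo 0 1)) :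
    AEStronglyMeasurable (fun t => u t (k t)) (volume.restrict (Ioo 0 1)) := by
  classical
  obtain ⟨hmeas, hcont⟩ := hu
  set μ := volume.restrict (Ioo (0:ℝ) 1)
  set N := toMeasurable μ {t | ¬Continuous (u t)}
  -- Redefine `u` on a measurable null set so that it becomes continuous in `x` for every `t`.
  set u' : ℝ → X → Y := fun t => if t ∈ N then fun _ => Classical.arbitrary Y else u t
  have hu'cont : ∀ t, Continuous (u' t) := fun t => by
    by_cases ht : t ∈ N
    · simp only [u', if_pos ht, continuous_const]
    · simp only [u', if_neg ht]
      by_contra h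
      exact ht (subset_toMeasurable _ _ h)
  have hu'meas : ∀ x, Measurable fun t => u' t x := fun x => by
    simp only [u', apply_ite (fun f : X → Y => f x)]
    exact Measurable.ite (measurableSet_toMeasurable _ _) measurable_const (hmeas x)
  have hjoint : Measurable (Function.uncurry fun x t => u' t x) :=
    measurable_uncurry_of_continuous_of_measurable hu'cont hu'meas
  refine (hjoint.comp_aemeasurable ((hk.aemeasurable measurableSet_Ioo).prodMk
    aemeasurable_id)).aestronglyMeasurable.congr ?_
  have hN : ∀ᵐ t ∂μ, t ∉ N := by
    rw [ae_iff]
    simpa [N, measure_toMeasurable, ← ae_iff] using hcont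
  filter_upwards [hN] with t ht
  simp [u', ht]

section AC2

variable {d : ℕ} {γ g : ℝ → EuclideanSpace ℝ (Fin d)}

lemma IsAC2.integrableOn (hγ : IsAC2 γ g) : IntegrableOn g (Ioc 0 1) :=
  memLp_one_iff_integrable.mp (hγ.1.mono_exponent (by norm_num))

lemma IsAC2.continuousOn_s13 (hγ : IsAC2 γ g) : ContinuousOn γ (Icc 0 1) := by
  have hg : IntegrableOn g (uIcc 0 1) := by
    rw [uIcc_of_le zero_le_one]
    exact (integrableOn_Icc_iff_integrableOn_Ioc (f := g)).mpr hγ.integrableOn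
  have hprim := intervalIntegral.continuousOn_primitive_interval hg
  rw [uIcc_of_le zero_le_one] at hprim
  exact (continuousOn_const.add hprim).congr hγ.2

lemma IsAC2.eq_add_integral (hγ : IsAC2 γ g) {a t : ℝ} (ha : a ∈ Icc (0:ℝ) 1)
    (ht : t ∈ Icc (0:ℝ) 1) : γ t = γ a + ∫ s in a..t, g s := by
  have hII : ∀ x ∈ Icc (0:ℝ) 1, IntervalIntegrable g volume 0 x := fun x hx =>
    (intervalIntegrable_iff_integrableOn_Ioc_of_le hx.1).mpr
      (hγ.integrableOn.mono_set (Ioc_subset_Ioc_right hx.2))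
  rw [hγ.2 t ht, hγ.2 a ha, ← intervalIntegral.integral_add_adjacent_intervals (hII a ha)
    ((hII a ha).symm.trans (hII t ht)), add_assoc]

lemma IsAC2.eq_add_smul_of_ae_eq (hγ : IsAC2 γ g) {a b : ℝ} (ha : 0 ≤ a) (hb : b ≤ 1)
    {p : EuclideanSpace ℝ (Fin d)} (hg : ∀ᵐ s ∂volume.restrict (Ioc a b), g s = p) :
    ∀ t ∈ Icc a b, γ t = γ a + (t - a) • p := by
  intro t ht
  rw [hγ.eq_add_integral ⟨ha, ht.1.trans (ht.2.trans hb)⟩ ⟨ha.trans ht.1, ht.2.trans hb⟩,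
    intervalIntegral.integral_of_le ht.1,
    integral_congr_ae (ae_restrict_of_ae_restrict_of_subset (Ioc_subset_Ioc_right ht.2) hg),
    setIntegral_const, Real.volume_real_Ioc_of_le ht.1]

lemma isAC2_const (x : EuclideanSpace ℝ (Fin d)) : IsAC2 (fun _ => x) 0 :=
  ⟨MemLp.zero, fun t _ => by simp⟩

lemma isAC2_primitive {h : ℝ → EuclideanSpace ℝ (Fin d)}
    (hh : MemLp h 2 (volume.restrict (Ioc 0 1))) : IsAC2 (fun t => ∫ s in (0:ℝ)..t, h s) h :=
  ⟨hh, fun t _ => by simp⟩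

end AC2

section IntegralTail

variable {X : Type*} [NormedAddCommGroup X] [NormedSpace ℝ X] {G : ℝ → X} {a b c : ℝ}

lemma memLp_integral_tail [CompleteSpace X] (hab : a ≤ b) (hG : IntegrableOn G (Ioc a b))
    (p : ENNReal) : MemLp (fun s => ∫ t in s..b, G t) p (volume.restrict (Ioc a b)) := by
  have hcont : ContinuousOn (fun s => ∫ t in s..b, G t) (Icc a b) := by
    have hG' : IntegrableOn G (uIcc a b) := by
      rw [uIcc_of_le hab]
      exact (integrableOn_Icc_iff_integrableOn_Ioc (f := G)).mpr hG
    simpa only [uIcc_of_le hab] using intervalIntegral.continuousOn_primitive_interval_left hG'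
  obtain ⟨C, hC⟩ := isCompact_Icc.exists_bound_of_continuousOn hcont
  refine MemLp.of_bound ((hcont.mono Ioc_subset_Icc_self).aestronglyMeasurable measurableSet_Ioc)
    C ?_
  filter_upwards [ae_restrict_mem measurableSet_Ioc] with s hs using hC s (Ioc_subset_Icc_self hs)

lemma integral_tail_eq_of_ae_eq_zero (hbc : b ≤ c) (hG : IntegrableOn G (Ioc a c))
    (h0 : ∀ᵐ t ∂volume.restrict (Ioo a b), G t = 0) :
    ∀ s ∈ Icc a b, ∫ t in s..c, G t = ∫ t in b..c, G t := by
  intro s hs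
  have hII : ∀ x y, a ≤ x → x ≤ y → y ≤ c → IntervalIntegrable G volume x y :=
    fun x y hx hxy hy =>
      (intervalIntegrable_iff_integrableOn_Ioc_of_le hxy).mpr (hG.mono_set (Ioc_subset_Ioc hx hy))
  rw [← intervalIntegral.integral_add_adjacent_intervals (hII s b hs.1 hs.2 hbc)
    (hII b c (hs.1.trans hs.2) hbc le_rfl), intervalIntegral.integral_of_le hs.2,
    integral_Ioc_eq_integral_Ioo,
    integral_eq_zero_of_ae (ae_restrict_of_ae_restrict_of_subset (Ioo_subset_Ioo_left hs.1) h0),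
    zero_add]

end IntegralTail

section InnerProduct

variable {X : Type*} [NormedAddCommGroup X] [InnerProductSpace ℝ X]

lemma MeasureTheory.MemLp.integrable_inner {α : Type*} {m : MeasurableSpace α} {μ : Measure α}
    {f h : α → X} (hf : MemLp f 2 μ) (hh : MemLp h 2 μ) : Integrable (fun x => ⟪f x, h x⟫) μ :=
  (L2.integrable_inner (𝕜 := ℝ) (hf.toLp f) (hh.toLp h)).congr <| by
    filter_upwards [hf.coeFn_toLp, hh.coeFn_toLp] with x h₁ h₂
    rw [h₁, h₂]

/-- Both sides are the integral of `⟪G t, h s⟫` over the triangle `a < s ≤ t ≤ b`. -/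
theorem integral_inner_primitive_eq_integral_inner_tail [CompleteSpace X] {G h : ℝ → X}
    {a b : ℝ} (hab : a ≤ b) (hG : IntegrableOn G (Ioc a b)) (hh : IntegrableOn h (Ioc a b)) :
    ∫ t in a..b, ⟪G t, ∫ s in a..t, h s⟫ = ∫ s in a..b, ⟪∫ t in s..b, G t, h s⟫ := by
  set ν := volume.restrict (Ioc a b)
  set q : ℝ × ℝ → ℝ := {p | p.2 ≤ p.1}.indicator fun p => ⟪G p.1, h p.2⟫
  have hq : Integrable q (ν.prod ν) := by
    refine (hG.norm.mul_prod hh.norm).mono' ?_ (Filter.Eventually.of_forall fun p => ?_)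
    · exact ((hG.aestronglyMeasurable.comp_fst).inner hh.aestronglyMeasurable.comp_snd).indicator
        (measurableSet_le measurable_snd measurable_fst)
    · exact (norm_indicator_le_norm_self _ _).trans (norm_inner_le_norm _ _)
  have hleft : ∀ t ∈ Ioc a b, ∫ s, q (t, s) ∂ν = ⟪G t, ∫ s in a..t, h s⟫ := by
    intro t ht
    have hqt : (fun s => q (t, s)) = (Iic t).indicator fun s => ⟪G t, h s⟫ := by
      ext s; simp [q, indicator]
    rw [hqt, integral_indicator measurableSet_Iic, Measure.restrict_restrict measurableSet_Iic,
      inter_comm, Ioc_inter_Iic, min_eq_right ht.2, integral_inner,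
      intervalIntegral.integral_of_le ht.1.le]
    exact hh.mono_set (Ioc_subset_Ioc_right ht.2)
  have hright : ∀ s ∈ Ioc a b, ∫ t, q (t, s) ∂ν = ⟪∫ t in s..b, G t, h s⟫ := by
    intro s hs
    have hqs : (fun t => q (t, s)) = (Ici s).indicator fun t => ⟪h s, G t⟫ := by
      ext t; simp [q, indicator, real_inner_comm]
    have hset : Ici s ∩ Ioc a b = Icc s b := by
      ext t; simp only [mem_inter_iff, mem_Ici, mem_Ioc, mem_Icc]
      exact ⟨fun h => ⟨h.1, h.2.2⟩, fun h => ⟨h.1, hs.1.trans_le h.1, h.2⟩⟩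
    rw [hqs, integral_indicator measurableSet_Ici, Measure.restrict_restrict measurableSet_Ici,
      hset, integral_Icc_eq_integral_Ioc, integral_inner, intervalIntegral.integral_of_le hs.2,
      real_inner_comm]
    exact hG.mono_set (Ioc_subset_Ioc_left hs.1.le)
  rw [intervalIntegral.integral_of_le hab, intervalIntegral.integral_of_le hab,
    ← setIntegral_congr_fun measurableSet_Ioc hleft,
    ← setIntegral_congr_fun measurableSet_Ioc hright]
  exact integral_integral_swap hq

end InnerProduct

section EulerLagrange

variable {d : ℕ} {G g : ℝ → EuclideanSpace ℝ (Fin d)} {c : ℝ}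

theorem ae_smul_eq_neg_integral_tail_of_forall_isAC2 (hG : IntegrableOn G (Ioc 0 1))
    (hg : MemLp g 2 (volume.restrict (Ioc 0 1)))
    (hEL : ∀ η h : ℝ → EuclideanSpace ℝ (Fin d), IsAC2 η h →
      -∫ t in (0:ℝ)..1, ⟪G t, η t⟫ = c * ∫ t in (0:ℝ)..1, ⟪g t, h t⟫) :
    ∀ᵐ s ∂volume.restrict (Ioc 0 1), c • g s = -∫ t in s..1, G t := by
  set V := fun s => ∫ t in s..1, G t
  have hV : MemLp V 2 (volume.restrict (Ioc 0 1)) := memLp_integral_tail zero_le_one hG 2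
  set m := fun s => c • g s + V s
  have hm : MemLp m 2 (volume.restrict (Ioc 0 1)) := (hg.const_smul c).add hV
  -- Test the equation against the primitive of `m` itself.
  have htest := hEL _ m (isAC2_primitive hm)
  rw [integral_inner_primitive_eq_integral_inner_tail zero_le_one hG
    (memLp_one_iff_integrable.mp (hm.mono_exponent (by norm_num)))] at htest
  simp only [intervalIntegral.integral_of_le zero_le_one] at htest
  have hsq : ∫ s in Ioc 0 1, ‖m s‖ ^ 2 = 0 :=
    calc ∫ s in Ioc 0 1, ‖m s‖ ^ 2 = ∫ s in Ioc 0 1, (c * ⟪g s, m s⟫ + ⟪V s, m s⟫) := by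
          congr 1; ext s
          rw [← real_inner_self_eq_norm_sq]
          change ⟪c • g s + V s, m s⟫ = _
          rw [inner_add_left, real_inner_smul_left]
      _ = 0 := by
          rw [integral_add ((hg.integrable_inner hm).const_mul c) (hV.integrable_inner hm),
            integral_const_mul]
          linarith
  have hm0 := (integral_eq_zero_iff_of_nonneg (fun s => sq_nonneg ‖m s‖)
    (hm.integrable_norm_pow two_ne_zero)).mp hsq
  filter_upwards [hm0] with s hs
  rw [← add_eq_zero_iff_eq_neg]
  simpa [m] using hs

theorem integral_eq_zero_of_forall_isAC2 (hG : IntegrableOn G (Ioc 0 1))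
    (hEL : ∀ η h : ℝ → EuclideanSpace ℝ (Fin d), IsAC2 η h →
      -∫ t in (0:ℝ)..1, ⟪G t, η t⟫ = c * ∫ t in (0:ℝ)..1, ⟪g t, h t⟫) :
    ∫ t in (0:ℝ)..1, G t = 0 := by
  rw [intervalIntegral.integral_of_le zero_le_one]
  refine integral_eq_zero_of_forall_integral_inner_eq_zero ℝ _ hG fun x => ?_
  simpa [real_inner_comm, intervalIntegral.integral_of_le zero_le_one] using
    hEL _ 0 (isAC2_const x)

lemma IsAC2.eq_add_smul_of_smul_eq_neg_integral_tail {γ : ℝ → EuclideanSpace ℝ (Fin d)}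
    (hγ : IsAC2 γ g) (hG : IntegrableOn G (Ioc 0 1)) (hc : c ≠ 0)
    (hgG : ∀ᵐ s ∂volume.restrict (Ioc 0 1), c • g s = -∫ t in s..1, G t) {a b : ℝ}
    (ha : 0 ≤ a) (hb : b ≤ 1) (hG0 : ∀ᵐ t ∂volume.restrict (Ioo a b), G t = 0) :
    ∀ t ∈ Icc a b, γ t = γ a + (t - a) • (-c⁻¹ • ∫ t in b..1, G t) := by
  refine hγ.eq_add_smul_of_ae_eq ha hb ?_
  filter_upwards [ae_restrict_of_ae_restrict_of_subset (Ioc_subset_Ioc ha hb) hgG,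
    ae_restrict_mem measurableSet_Ioc] with s hs hsab
  rw [← integral_tail_eq_of_ae_eq_zero hb (hG.mono_set (Ioc_subset_Ioc_left ha)) hG0 s
    (Ioc_subset_Icc_self hsab), neg_smul, ← smul_neg, ← hs, inv_smul_smul₀ hc]

end EulerLagrange

section InsertionStep

variable {d : ℕ} {w : ℝ → EuclideanSpace ℝ (Fin d) → ℝ}

lemma integrableOn_gradient_comp
    (hw : ∀ᵐ t ∂volume.restrict (Ioo (0:ℝ) 1), ∃ K : NNReal, LipschitzWith K (gradient (w t)))
    (hCar : Caratheodory fun t => gradient (w t))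
    (hnorm : IntervalIntegrable (fun t => C11norm (w t) ^ 2) volume 0 1)
    {z : EuclideanSpace ℝ (Fin d)}
    (hz : ∀ᵐ t ∂volume.restrict (Ioo (0:ℝ) 1), gradient (w t) z = 0)
    {γ : ℝ → EuclideanSpace ℝ (Fin d)} (hγ : ContinuousOn γ (Icc 0 1)) :
    IntegrableOn (fun t => gradient (w t) (γ t)) (Ioc 0 1) := by
  rw [integrableOn_Ioc_iff_integrableOn_Ioo]
  obtain ⟨M, hM⟩ := isCompact_Icc.exists_bound_of_continuousOn hγ
  have hK : 0 ≤ M + ‖z‖ :=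
    add_nonneg ((norm_nonneg _).trans (hM 0 ⟨le_rfl, zero_le_one⟩)) (norm_nonneg z)
  have hbound : IntegrableOn (fun t => (M + ‖z‖) * (1 + C11norm (w t) ^ 2)) (Ioo 0 1) :=
    ((integrable_const (1:ℝ)).add
      ((intervalIntegrable_iff_integrableOn_Ioo_of_le zero_le_one).mp hnorm)).const_mul _
  refine hbound.mono' (hCar.aestronglyMeasurable_comp (hγ.mono Ioo_subset_Icc_self)) ?_
  filter_upwards [hw, hz, ae_restrict_mem measurableSet_Ioo] with t hLip hzt ht
  have hdist : dist (γ t) z ≤ M + ‖z‖ :=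
    (dist_le_norm_add_norm _ _).trans (by gcongr; exact hM t (Ioo_subset_Icc_self ht))
  calc ‖gradient (w t) (γ t)‖ ≤ C11norm (w t) * dist (γ t) z :=
        norm_gradient_le_C11norm_mul_dist hLip hzt _
    _ ≤ C11norm (w t) * (M + ‖z‖) := by gcongr; exact C11norm_nonneg _
    _ ≤ (M + ‖z‖) * (1 + C11norm (w t) ^ 2) := by
        nlinarith [mul_nonneg hK (sq_nonneg (C11norm (w t) - 1))]

lemma Fc_eq_zero_of_ae_eq_zero {α β : ℝ} {γ g : ℝ → EuclideanSpace ℝ (Fin d)}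
    (h : ∀ᵐ t ∂volume.restrict (Ioo (0:ℝ) 1), w t (γ t) = 0) : Fc α β w γ g = 0 := by
  rw [Fc, Wc, intervalIntegral.integral_of_le zero_le_one,
    ← Measure.restrict_congr_set Ioo_ae_eq_Ioc, integral_eq_zero_of_ae h, neg_zero, zero_div]

end InsertionStep

section Excursions

variable {α : Type*} [ConditionallyCompleteLinearOrder α] [TopologicalSpace α] [OrderTopology α]
  {S : Set α}

lemma IsClosed.exists_mem_or_eq_forall_Ioc_notMem (hS : IsClosed S) {lo x : α} (h : lo ≤ x) :
    ∃ a ∈ Icc lo x, (a ∈ S ∨ a = lo) ∧ ∀ t ∈ Ioc a x, t ∉ S := by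
  set T := insert lo (S ∩ Icc lo x)
  have hT : IsClosed T := isClosed_singleton.union (hS.inter isClosed_Icc)
  have hub : ∀ t ∈ T, t ≤ x := by rintro t (rfl | ⟨-, -, ht⟩) <;> assumption
  have hne : T.Nonempty := insert_nonempty _ _
  refine ⟨sSup T, ⟨le_csSup ⟨x, hub⟩ (mem_insert _ _), csSup_le hne hub⟩, ?_, ?_⟩
  · rcases hT.csSup_mem hne ⟨x, hub⟩ with h | ⟨h, -⟩
    exacts [Or.inr h, Or.inl h]
  · intro t ht htS
    have hlo : lo ≤ t := (le_csSup ⟨x, hub⟩ (mem_insert _ _)).trans ht.1.le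
    exact (le_csSup ⟨x, hub⟩ (mem_insert_of_mem _ ⟨htS, hlo, ht.2⟩)).not_gt ht.1

lemma IsClosed.exists_mem_or_eq_forall_Ico_notMem (hS : IsClosed S) {x hi : α} (h : x ≤ hi) :
    ∃ b ∈ Icc x hi, (b ∈ S ∨ b = hi) ∧ ∀ t ∈ Ico x b, t ∉ S := by
  obtain ⟨b, hb, hbS, hfree⟩ :=
    IsClosed.exists_mem_or_eq_forall_Ioc_notMem (S := OrderDual.ofDual ⁻¹' S) hS
      (OrderDual.toDual_le_toDual.mpr h)
  exact ⟨b, ⟨hb.2, hb.1⟩, hbS, fun t ht => hfree t ⟨ht.2, ht.1⟩⟩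

end Excursions

lemma Convex.add_smul_mem_of_mem_Icc {X : Type*} [AddCommGroup X] [Module ℝ X] {E : Set X}
    (hE : Convex ℝ E) {x p : X} {a b t : ℝ} (hx : x ∈ E) (hy : x + (b - a) • p ∈ E)
    (ht : t ∈ Icc a b) : x + (t - a) • p ∈ E := by
  rcases (ht.1.trans ht.2).eq_or_lt with rfl | hab
  · simpa [le_antisymm ht.2 ht.1] using hx
  have hθ : (t - a) / (b - a) ∈ Icc (0:ℝ) 1 :=
    ⟨div_nonneg (sub_nonneg.mpr ht.1) (sub_nonneg.mpr hab.le),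
      (div_le_one (sub_pos.mpr hab)).mpr (by linarith [ht.2])⟩
  have h := hE.add_smul_mem hx hy hθ
  rwa [smul_smul, div_mul_cancel₀ _ (sub_pos.mpr hab).ne'] at h

theorem mapsTo_of_affine_on_excursions {X : Type*} [NormedAddCommGroup X] [NormedSpace ℝ X]
    {E : Set X} (hEcl : IsClosed E) (hEconv : Convex ℝ E) {γ : ℝ → X}
    (hγ : ContinuousOn γ (Icc 0 1)) (hmeet : ∃ t ∈ Icc (0:ℝ) 1, γ t ∈ E)
    (haff : ∀ a b : ℝ, 0 ≤ a → a ≤ b → b ≤ 1 → (∀ t ∈ Ioo a b, γ t ∉ E) →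
      ∃ p : X, (∀ t ∈ Icc a b, γ t = γ a + (t - a) • p) ∧ (a = 0 → p = 0) ∧ (b = 1 → p = 0)) :
    MapsTo γ (Icc 0 1) E := by
  intro t₀ ht₀
  by_contra hγt₀
  have hS : IsClosed (Icc 0 1 ∩ γ ⁻¹' E) := hγ.preimage_isClosed_of_isClosed isClosed_Icc hEcl
  obtain ⟨a, ⟨ha0, hat₀⟩, haS, hleft⟩ := hS.exists_mem_or_eq_forall_Ioc_notMem ht₀.1
  obtain ⟨b, ⟨ht₀b, hb1⟩, hbS, hright⟩ := hS.exists_mem_or_eq_forall_Ico_notMem ht₀.2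
  have hexc : ∀ t ∈ Ioo a b, γ t ∉ E := fun t ht hγt => by
    have htI : t ∈ Icc (0:ℝ) 1 := ⟨ha0.trans ht.1.le, ht.2.le.trans hb1⟩
    rcases le_total t t₀ with h | h
    exacts [hleft t ⟨ht.1, h⟩ ⟨htI, hγt⟩, hright t ⟨h, ht.2⟩ ⟨htI, hγt⟩]
  obtain ⟨p, hp, hpa, hpb⟩ := haff a b ha0 (hat₀.trans ht₀b) hb1 hexc
  have hγt₀' := hp t₀ ⟨hat₀, ht₀b⟩
  by_cases hp0 : p = 0
  · simp only [hp0, smul_zero, add_zero] at hp hγt₀'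
    rcases haS with ⟨-, haE⟩ | rfl
    · exact hγt₀ (hγt₀' ▸ haE)
    rcases hbS with ⟨-, hbE⟩ | rfl
    · exact hγt₀ (hγt₀' ▸ hp b ⟨hat₀.trans ht₀b, le_rfl⟩ ▸ hbE)
    obtain ⟨t, ht, hγt⟩ := hmeet
    exact hγt₀ (hγt₀' ▸ hp t ht ▸ hγt)
  · have haE := (haS.resolve_right fun h => hp0 (hpa h)).2
    have hbE := (hbS.resolve_right fun h => hp0 (hpb h)).2
    rw [mem_preimage, hp b ⟨hat₀.trans ht₀b, le_rfl⟩] at hbE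
    exact hγt₀ (hγt₀' ▸ hEconv.add_smul_mem_of_mem_Icc haE hbE ⟨hat₀, ht₀b⟩)

theorem stationary_points_confined_to_E_general
    {d : ℕ}
    (E : Set (EuclideanSpace ℝ (Fin d)))
    (hEcl : IsClosed E) (hEconv : Convex ℝ E)
    (α β : ℝ) (hβ : 0 < β)
    (w : ℝ → EuclideanSpace ℝ (Fin d) → ℝ)
    (hw : ∀ᵐ t ∂(volume.restrict (Ioo (0:ℝ) 1)),
      Differentiable ℝ (w t) ∧ ∃ K : NNReal, LipschitzWith K (gradient (w t)))
    (hCargrad : Caratheodory fun t => gradient (w t))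
    (hnorm : IntervalIntegrable (fun t => (C11norm (w t)) ^ 2) volume 0 1)
    (hsupp : ∀ᵐ t ∂(volume.restrict (Ioo (0:ℝ) 1)),
      ∀ x ∉ E, w t x = 0 ∧ gradient (w t) x = 0)
    (γ g : ℝ → EuclideanSpace ℝ (Fin d)) (hγ : IsAC2 γ g)
    (hF0 : Fc α β w γ g ≠ 0)
    (hEL : ∀ η h : ℝ → EuclideanSpace ℝ (Fin d), IsAC2 η h →
      -∫ t in (0:ℝ)..1, ⟪gradient (w t) (γ t), η t⟫ =
        β * Fc α β w γ g * ∫ t in (0:ℝ)..1, ⟪g t, h t⟫) :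
    ∀ t ∈ Icc (0:ℝ) 1, γ t ∈ E := by
  by_cases hE : E = univ
  · exact fun t _ => hE ▸ mem_univ (γ t)
  obtain ⟨z, hz⟩ := (ne_univ_iff_exists_notMem E).mp hE
  set G := fun t => gradient (w t) (γ t)
  have hG : IntegrableOn G (Ioc 0 1) := integrableOn_gradient_comp (hw.mono fun t ht => ht.2)
    hCargrad hnorm (hsupp.mono fun t ht => (ht z hz).2) hγ.continuousOn_s13
  have hgG := ae_smul_eq_neg_integral_tail_of_forall_isAC2 hG hγ.1 hEL
  have hG1 : ∫ t in (0:ℝ)..1, G t = 0 := integral_eq_zero_of_forall_isAC2 hG hEL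
  refine mapsTo_of_affine_on_excursions hEcl hEconv hγ.continuousOn_s13 ?_
    fun a b ha hab hb hexc => ?_
  · by_contra! hout
    refine hF0 (Fc_eq_zero_of_ae_eq_zero ?_)
    filter_upwards [hsupp, ae_restrict_mem measurableSet_Ioo] with t ht htI
    exact (ht _ (hout t (Ioo_subset_Icc_self htI))).1
  have hG0 : ∀ᵐ t ∂volume.restrict (Ioo a b), G t = 0 := by
    filter_upwards [ae_restrict_of_ae_restrict_of_subset (Ioo_subset_Ioo ha hb) hsupp,
      ae_restrict_mem measurableSet_Ioo] with t ht htI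
    exact (ht _ (hexc t htI)).2
  refine ⟨_, hγ.eq_add_smul_of_smul_eq_neg_integral_tail hG (mul_ne_zero hβ.ne' hF0) hgG ha hb
    hG0, fun ha0 => ?_, fun hb1 => by simp [hb1]⟩
  rw [← integral_tail_eq_of_ae_eq_zero hb (hG.mono_set (Ioc_subset_Ioc_left ha)) hG0 a
    ⟨le_rfl, hab⟩, ha0, hG1, smul_zero]

/-- Proposition A.7: stationary points of the insertion-step functional with nonzero energy
are confined to the set `E`: if `γ` takes values in `closure Ω`, `F(γ) ≠ 0`, and `γ` solves
the weak Euler–Lagrange equation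
`−∫₀¹ ∇w_t(γ) · η dt = β F(γ) ∫₀¹ γ̇ · η̇ dt` for every AC² curve `η`,
then `γ(t) ∈ E` for all `t ∈ [0,1]`. -/
theorem stationary_points_confined_to_E
    {d : ℕ} (hd : 1 ≤ d)
    (Ω : Set (EuclideanSpace ℝ (Fin d))) (hΩopen : IsOpen Ω)
    (hΩbdd : Bornology.IsBounded Ω)
    (E : Set (EuclideanSpace ℝ (Fin d))) (hEne : E.Nonempty)
    (hEcl : IsClosed E) (hEconv : Convex ℝ E) (hEΩ : E ⊆ Ω)
    (α β : ℝ) (hα : 0 < α) (hβ : 0 < β)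
    (w : ℝ → EuclideanSpace ℝ (Fin d) → ℝ)
    (hw : ∀ᵐ t ∂(volume.restrict (Ioo (0:ℝ) 1)),
      Differentiable ℝ (w t) ∧ ∃ K : NNReal, LipschitzWith K (gradient (w t)))
    (hCarw : Caratheodory w)
    (hCargrad : Caratheodory fun t => gradient (w t))
    (hnorm : IntervalIntegrable (fun t => (C11norm (w t)) ^ 2) volume 0 1)
    (hsupp : ∀ᵐ t ∂(volume.restrict (Ioo (0:ℝ) 1)),
      ∀ x ∉ E, w t x = 0 ∧ gradient (w t) x = 0)
    (γ g : ℝ → EuclideanSpace ℝ (Fin d)) (hγ : IsAC2 γ g)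
    (hrange : ∀ t ∈ Icc (0:ℝ) 1, γ t ∈ closure Ω)
    (hF0 : Fc α β w γ g ≠ 0)
    (hEL : ∀ η h : ℝ → EuclideanSpace ℝ (Fin d), IsAC2 η h →
      -∫ t in (0:ℝ)..1, ⟪gradient (w t) (γ t), η t⟫ =
        β * Fc α β w γ g * ∫ t in (0:ℝ)..1, ⟪g t, h t⟫) :
    ∀ t ∈ Icc (0:ℝ) 1, γ t ∈ E :=
  stationary_points_confined_to_E_general E hEcl hEconv α β hβ w hw hCargrad hnorm hsupp γ g hγ hF0
    hEL
end
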